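/- Suppose β ∈ ℝ^p is s-sparse and let B = β ⊗ β. Then for every matrix A ∈ ℝ^{p×p}, there exists a subgradient W ∈ ∂‖B‖_{Γ_s} of the mixed atomic norm at B such that ⟨W, A⟩ ≥ (1/10)·‖A‖_{Γ_s} − 5·‖A‖_F. -/

import Mathlib

open MeasureTheory ProbabilityTheory Finset

noncomputable section

/-- Vectors in ℝ^p. -/
abbrev Vec (p : ℕ) := Fin p → ℝ

/-- p × p real matrices. -/
abbrev Mat (p : ℕ) := Matrix (Fin p) (Fin p) ℝ

/-- Euclidean (ℓ2) norm. -/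
def l2 {p : ℕ} (u : Vec p) : ℝ := Real.sqrt (∑ i, (u i) ^ 2)

/-- ℓ1 norm. -/
def l1 {p : ℕ} (u : Vec p) : ℝ := ∑ i, |u i|

/-- Euclidean inner product. -/
def dotp {p : ℕ} (u v : Vec p) : ℝ := ∑ i, u i * v i

/-- θ_s(u,v) = (‖u‖₂ + s^{-1/2}‖u‖₁)(‖v‖₂ + s^{-1/2}‖v‖₁). -/
def theta {p : ℕ} (s : ℝ) (u v : Vec p) : ℝ :=
  (l2 u + (Real.sqrt s)⁻¹ * l1 u) * (l2 v + (Real.sqrt s)⁻¹ * l1 v)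

/-- Frobenius (Hilbert–Schmidt) inner product. -/
def frob {p : ℕ} (A B : Mat p) : ℝ := ∑ i, ∑ j, A i j * B i j

/-- Frobenius norm. -/
def frobNorm {p : ℕ} (A : Mat p) : ℝ := Real.sqrt (frob A A)

/-- The mixed atomic norm ‖B‖_{Γ_s}. -/
def mixedNorm {p : ℕ} (s : ℝ) (B : Mat p) : ℝ :=
  sInf { t | ∃ (K : ℕ) (u v : Fin K → Vec p),
    B = ∑ k, Matrix.vecMulVec (u k) (v k) ∧ t = ∑ k, theta s (u k) (v k) }

/-- Dual norm of the mixed atomic norm. -/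
def dualMixedNorm {p : ℕ} (s : ℝ) (Z : Mat p) : ℝ :=
  sSup { t | ∃ B : Mat p, mixedNorm s B ≤ 1 ∧ t = frob Z B }

/-- A vector is `s`-sparse if it has at most `s` nonzero entries. -/
def IsSparse {p : ℕ} (s : ℕ) (u : Vec p) : Prop := {i | u i ≠ 0}.ncard ≤ s

/-- Nuclear norm of a real matrix: the sum of its singular values. -/
def nuclearNorm {p : ℕ} (A : Mat p) : ℝ :=
  ∑ i, Real.sqrt ((show (A.transpose * A).IsHermitian by
    simpa using Matrix.isHermitian_conjTranspose_mul_self A).eigenvalues i)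

/-- Operator (spectral) norm of a real matrix. -/
def opNorm {p : ℕ} (A : Mat p) : ℝ :=
  sSup { t | ∃ u v : Vec p, l2 u ≤ 1 ∧ l2 v ≤ 1 ∧ t = dotp (A.mulVec u) v }

/-- `X` has sub-Gaussian (ψ₂) norm at most `K`: `E exp(X²/K²) ≤ 2`. -/
def HasSubgaussianNorm {Ω : Type*} [MeasurableSpace Ω] (μ : Measure Ω) (X : Ω → ℝ) (K : ℝ) :
    Prop := ∫ ω, Real.exp ((X ω) ^ 2 / K ^ 2) ∂μ ≤ 2

/-- `W` is a subgradient of the mixed atomic norm `‖·‖_{Γ_s}` at `B`. -/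
def InSubdiff {p : ℕ} (s : ℝ) (W B : Mat p) : Prop :=
  ∀ C : Mat p, mixedNorm s B + frob W (C - B) ≤ mixedNorm s C


/-!
Write `N(u) = ‖u‖₂ + s^{-1/2}‖u‖₁`, so that `θ_s(u, v) = N(u) N(v)`. A matrix `W` with
`⟨W, u vᵀ⟩ ≤ N(u) N(v)` for all `u, v` satisfies `⟨W, C⟩ ≤ ‖C‖_{Γ_s}` for every `C`; if moreover
`⟨W, B⟩ ≥ ‖B‖_{Γ_s}`, then `W ∈ ∂‖B‖_{Γ_s}`.

Let `S` be the support of `β`, `b = β / ‖β‖₂`, `σ = sign β`, `w = b + s^{-1/2} σ` (so that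
`⟨w, β⟩ = N(β)`), `P = 1 - b bᵀ`, and let `Z` be a norming functional of `A` in the dual ball
(Hahn–Banach). Take
`W = w wᵀ + (1/10) P Z P + (1/5) s^{-1/2} (b mᵀ + m' bᵀ)`,
where `m` and `m'` are the signs of `Aᵀ b` and `A b` outside `S`. Against `u vᵀ`, the terms are
controlled by `|⟨b, u⟩|`, the `ℓ₁` masses of `u` on `S` and off `S`, and
`N(P u) ≤ 2 ‖P u‖₂ + s^{-1/2} ‖u_{Sᶜ}‖₁`; since `‖P u‖₂² + ⟨b, u⟩² ≤ ‖u‖₂²`, the bound has the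
form `X(u) X(v) + Y(u) Y(v) / 10` with `X² + Y² / 10 ≤ N²`, and Cauchy–Schwarz concludes.
Against `A`, `⟨P Z P, A⟩ = ‖A‖_{Γ_s} - ⟨Z, b (P Aᵀ b)ᵀ⟩ - ⟨Z, (A b) bᵀ⟩`; the off-support `ℓ₁`
parts of the two error terms are cancelled exactly by the sign corrections, which leaves
`⟨W, A⟩ ≥ ‖A‖_{Γ_s} / 10 - (24/5) ‖A‖_F`.
-/

open Matrix

section VectorNorms

variable {p : ℕ}

lemma l2_nonneg (u : Vec p) : 0 ≤ l2 u := Real.sqrt_nonneg _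

lemma l1_nonneg (u : Vec p) : 0 ≤ l1 u := sum_nonneg fun _ _ => abs_nonneg _

lemma sq_l2 (u : Vec p) : l2 u ^ 2 = ∑ i, u i ^ 2 :=
  Real.sq_sqrt (sum_nonneg fun _ _ => sq_nonneg _)

lemma l2_eq_norm (u : Vec p) : l2 u = ‖(WithLp.toLp 2 u : EuclideanSpace ℝ (Fin p))‖ := by
  simp [l2, EuclideanSpace.norm_eq]

lemma abs_dotProduct_le (u v : Vec p) : |u ⬝ᵥ v| ≤ l2 u * l2 v := by
  rw [l2_eq_norm, l2_eq_norm]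
  convert abs_real_inner_le_norm (WithLp.toLp 2 u : EuclideanSpace ℝ (Fin p)) (WithLp.toLp 2 v)
    using 2
  simp [dotProduct, PiLp.inner_apply, mul_comm]

lemma l2_add_le (u v : Vec p) : l2 (u + v) ≤ l2 u + l2 v := by
  simpa only [l2_eq_norm, WithLp.toLp_add] using norm_add_le _ _

lemma l2_smul (c : ℝ) (u : Vec p) : l2 (c • u) = |c| * l2 u := by
  simp only [l2_eq_norm, WithLp.toLp_smul, norm_smul, Real.norm_eq_abs]

lemma l2_eq_zero {u : Vec p} : l2 u = 0 ↔ u = 0 := by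
  simp [l2_eq_norm]

lemma sum_abs_le_sqrt_card_mul_l2 (T : Finset (Fin p)) (u : Vec p) :
    ∑ j ∈ T, |u j| ≤ √(T.card : ℝ) * l2 u := by
  calc ∑ j ∈ T, |u j| = ∑ j ∈ T, 1 * |u j| := by simp
    _ ≤ √(∑ j ∈ T, (1 : ℝ) ^ 2) * √(∑ j ∈ T, |u j| ^ 2) := Real.sum_mul_le_sqrt_mul_sqrt _ _ _
    _ ≤ √(T.card : ℝ) * l2 u := by
      simp only [one_pow, sum_const, nsmul_eq_mul, mul_one, sq_abs, l2]
      gcongr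
      exact subset_univ T

lemma l1_eq_sum_add_sum_compl (S : Finset (Fin p)) (u : Vec p) :
    l1 u = ∑ j ∈ S, |u j| + ∑ j ∈ Sᶜ, |u j| :=
  (sum_add_sum_compl S _).symm

def IsSignVectorOn (T : Finset (Fin p)) (m : Vec p) : Prop :=
  (∀ j, |m j| ≤ 1) ∧ ∀ j ∉ T, m j = 0

lemma abs_dotProduct_le_sum_abs {T : Finset (Fin p)} {m : Vec p} (hm : IsSignVectorOn T m)
    (u : Vec p) : |m ⬝ᵥ u| ≤ ∑ j ∈ T, |u j| := by
  have hsum : m ⬝ᵥ u = ∑ j ∈ T, m j * u j :=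
    (sum_subset (subset_univ T) fun j _ hj => by simp [hm.2 j hj]).symm
  rw [hsum]
  refine (abs_sum_le_sum_abs _ _).trans (sum_le_sum fun j _ => ?_)
  rw [abs_mul]
  exact mul_le_of_le_one_left (abs_nonneg _) (hm.1 j)

end VectorNorms

section AtomNorm

variable {p : ℕ}

def atomNorm (s : ℝ) (u : Vec p) : ℝ := l2 u + (√s)⁻¹ * l1 u

lemma theta_eq_mul (s : ℝ) (u v : Vec p) : theta s u v = atomNorm s u * atomNorm s v := rfl

lemma atomNorm_nonneg (s : ℝ) (u : Vec p) : 0 ≤ atomNorm s u :=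
  add_nonneg (l2_nonneg u) (mul_nonneg (by positivity) (l1_nonneg u))

lemma atomNorm_neg (s : ℝ) (u : Vec p) : atomNorm s (-u) = atomNorm s u := by
  simp [atomNorm, l2, l1]

lemma atomNorm_smul_of_nonneg (s : ℝ) {c : ℝ} (hc : 0 ≤ c) (u : Vec p) :
    atomNorm s (c • u) = c * atomNorm s u := by
  have hl1 : l1 (c • u) = c * l1 u := by simp [l1, abs_mul, abs_of_nonneg hc, mul_sum]
  rw [atomNorm, atomNorm, l2_smul, hl1, abs_of_nonneg hc]
  ring

variable {s : ℝ} {S : Finset (Fin p)}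

lemma inv_sqrt_mul_sum_abs_le_l2 (hS : (S.card : ℝ) ≤ s) (u : Vec p) :
    (√s)⁻¹ * ∑ j ∈ S, |u j| ≤ l2 u := by
  have hcard : (√s)⁻¹ * √(S.card : ℝ) ≤ 1 :=
    inv_mul_le_one_of_le₀ (Real.sqrt_le_sqrt hS) (Real.sqrt_nonneg _)
  calc (√s)⁻¹ * ∑ j ∈ S, |u j| ≤ (√s)⁻¹ * (√(S.card : ℝ) * l2 u) := by
        gcongr; exact sum_abs_le_sqrt_card_mul_l2 S u
    _ ≤ l2 u := by
        rw [← mul_assoc]; exact mul_le_of_le_one_left (l2_nonneg u) hcard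

lemma atomNorm_eq (s : ℝ) (S : Finset (Fin p)) (u : Vec p) :
    atomNorm s u = l2 u + (√s)⁻¹ * ∑ j ∈ S, |u j| + (√s)⁻¹ * ∑ j ∈ Sᶜ, |u j| := by
  rw [atomNorm, l1_eq_sum_add_sum_compl S]; ring

lemma atomNorm_le_two_mul_l2_add (hS : (S.card : ℝ) ≤ s) (u : Vec p) :
    atomNorm s u ≤ 2 * l2 u + (√s)⁻¹ * ∑ j ∈ Sᶜ, |u j| := by
  rw [atomNorm_eq s S]
  linarith [inv_sqrt_mul_sum_abs_le_l2 hS u]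

lemma inv_sqrt_mul_l2_le_one (hS : (S.card : ℝ) ≤ s) {σ : Vec p} (hσ : IsSignVectorOn S σ) :
    (√s)⁻¹ * l2 σ ≤ 1 := by
  rcases (l2_nonneg σ).eq_or_lt with h | h
  · rw [← h, mul_zero]; exact zero_le_one
  -- `‖σ‖₂² = σ ⬝ᵥ σ ≤ ∑_{j ∈ S} |σ j| ≤ √s ‖σ‖₂`
  have hsq : l2 σ * l2 σ = σ ⬝ᵥ σ := by simp [← sq, sq_l2, dotProduct]
  have key : (√s)⁻¹ * l2 σ * l2 σ ≤ 1 * l2 σ := by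
    rw [mul_assoc, hsq, one_mul]
    calc (√s)⁻¹ * σ ⬝ᵥ σ ≤ (√s)⁻¹ * ∑ j ∈ S, |σ j| := by
          gcongr; exact (le_abs_self _).trans (abs_dotProduct_le_sum_abs hσ σ)
      _ ≤ l2 σ := inv_sqrt_mul_sum_abs_le_l2 hS σ
  exact le_of_mul_le_mul_right key h

end AtomNorm

section Projection

variable {p : ℕ}

def proj (b u : Vec p) : Vec p := u - (b ⬝ᵥ u) • b

lemma sq_l2_proj_add_sq_le {b : Vec p} (hb : l2 b ≤ 1) (u : Vec p) :
    l2 (proj b u) ^ 2 + (b ⬝ᵥ u) ^ 2 ≤ l2 u ^ 2 := by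
  set d := b ⬝ᵥ u
  have hexp : l2 (proj b u) ^ 2 = l2 u ^ 2 - 2 * d * d + d ^ 2 * l2 b ^ 2 := by
    simp only [sq_l2, proj, Pi.sub_apply, Pi.smul_apply, smul_eq_mul]
    calc ∑ i, (u i - d * b i) ^ 2 = ∑ i, (u i ^ 2 - 2 * d * (b i * u i) + d ^ 2 * b i ^ 2) :=
          sum_congr rfl fun i _ => by ring
      _ = _ := by rw [sum_add_distrib, sum_sub_distrib, ← mul_sum, ← mul_sum]; rfl
  have hb2 : l2 b ^ 2 ≤ 1 := by nlinarith [l2_nonneg b]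
  nlinarith [sq_nonneg d]

lemma proj_apply_of_eq_zero {b : Vec p} {j : Fin p} (hj : b j = 0) (u : Vec p) :
    proj b u j = u j := by
  simp [proj, hj]

def projMatrix (b : Vec p) : Mat p := 1 - vecMulVec b b

lemma projMatrix_mulVec (b u : Vec p) : projMatrix b *ᵥ u = proj b u := by
  ext i
  simp [projMatrix, proj, sub_mulVec, vecMulVec_mulVec, mul_comm]

lemma transpose_projMatrix (b : Vec p) : (projMatrix b)ᵀ = projMatrix b := by
  simp [projMatrix, transpose_vecMulVec]

lemma vecMul_projMatrix (b u : Vec p) : u ᵥ* projMatrix b = proj b u := by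
  rw [← transpose_projMatrix, vecMul_transpose, projMatrix_mulVec]

end Projection

section Frobenius

variable {p : ℕ}

lemma frob_eq_trace (A B : Mat p) : frob A B = (Aᵀ * B).trace := by
  simp only [frob, trace, Matrix.diag, mul_apply, transpose_apply]
  exact sum_comm

lemma frob_comm (A B : Mat p) : frob A B = frob B A := by
  simp only [frob, mul_comm]

lemma frob_add_left (A B C : Mat p) : frob (A + B) C = frob A C + frob B C := by
  simp only [frob_eq_trace, transpose_add, Matrix.add_mul, trace_add]

lemma frob_smul_left (c : ℝ) (A C : Mat p) : frob (c • A) C = c * frob A C := by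
  simp only [frob_eq_trace, transpose_smul, Matrix.smul_mul, trace_smul, smul_eq_mul]

lemma frob_sub_right (A B C : Mat p) : frob A (B - C) = frob A B - frob A C := by
  simp only [frob_eq_trace, Matrix.mul_sub, trace_sub]

lemma frob_neg_right (A B : Mat p) : frob A (-B) = -frob A B := by
  simp only [frob_eq_trace, Matrix.mul_neg, trace_neg]

lemma frob_sum_right {K : ℕ} (A : Mat p) (B : Fin K → Mat p) :
    frob A (∑ k, B k) = ∑ k, frob A (B k) := by
  simp only [frob_eq_trace, Matrix.mul_sum, trace_sum]

lemma frob_vecMulVec (A : Mat p) (u v : Vec p) : frob A (vecMulVec u v) = u ⬝ᵥ (A *ᵥ v) := by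
  simp only [frob, vecMulVec_apply, dotProduct, mulVec, mul_sum]
  exact sum_congr rfl fun i _ => sum_congr rfl fun j _ => by ring

lemma frob_mul_mul (M Z N C : Mat p) : frob (M * Z * N) C = frob Z (Mᵀ * C * Nᵀ) := by
  simp only [frob_eq_trace, transpose_mul, Matrix.mul_assoc]
  rw [trace_mul_comm, Matrix.mul_assoc, Matrix.mul_assoc]

lemma l2_mulVec_le (A : Mat p) (u : Vec p) : l2 (A *ᵥ u) ≤ frobNorm A * l2 u := by
  have hsq : ∑ i, (A *ᵥ u) i ^ 2 ≤ (∑ i, ∑ j, A i j ^ 2) * ∑ j, u j ^ 2 := by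
    rw [sum_mul]
    exact sum_le_sum fun i _ => sum_mul_sq_le_sq_mul_sq univ (A i) u
  have hfrob : frob A A = ∑ i, ∑ j, A i j ^ 2 := by simp only [frob, sq]
  calc l2 (A *ᵥ u) ≤ √((∑ i, ∑ j, A i j ^ 2) * ∑ j, u j ^ 2) := Real.sqrt_le_sqrt hsq
    _ = frobNorm A * l2 u := by
      rw [Real.sqrt_mul (by positivity), frobNorm, hfrob]
      rfl

lemma frobNorm_transpose (A : Mat p) : frobNorm Aᵀ = frobNorm A := by
  simp only [frobNorm, frob, transpose_apply]
  rw [sum_comm]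

lemma l2_vecMul_le (A : Mat p) (u : Vec p) : l2 (u ᵥ* A) ≤ frobNorm A * l2 u := by
  have h := l2_mulVec_le Aᵀ u
  rwa [frobNorm_transpose, ← vecMul_transpose, transpose_transpose] at h

end Frobenius

section MixedNorm

open scoped Pointwise

variable {p : ℕ}

def decompositionCosts (s : ℝ) (B : Mat p) : Set ℝ :=
  { t | ∃ (K : ℕ) (u v : Fin K → Vec p),
    B = ∑ k, vecMulVec (u k) (v k) ∧ t = ∑ k, theta s (u k) (v k) }

lemma mixedNorm_eq_sInf (s : ℝ) (B : Mat p) : mixedNorm s B = sInf (decompositionCosts s B) :=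
  rfl

lemma decompositionCosts_nonempty (s : ℝ) (B : Mat p) : (decompositionCosts s B).Nonempty := by
  refine ⟨_, p, fun k => Pi.single k 1, fun k => B k, ?_, rfl⟩
  ext i j
  simp [Matrix.sum_apply, vecMulVec_apply, Pi.single_apply]

lemma nonneg_of_mem_decompositionCosts {s t : ℝ} {B : Mat p} (ht : t ∈ decompositionCosts s B) :
    0 ≤ t := by
  obtain ⟨K, u, v, -, rfl⟩ := ht
  exact sum_nonneg fun k _ => mul_nonneg (atomNorm_nonneg s _) (atomNorm_nonneg s _)

lemma decompositionCosts_bddBelow (s : ℝ) (B : Mat p) : BddBelow (decompositionCosts s B) :=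
  ⟨0, fun _ => nonneg_of_mem_decompositionCosts⟩

lemma mixedNorm_nonneg (s : ℝ) (B : Mat p) : 0 ≤ mixedNorm s B :=
  le_csInf (decompositionCosts_nonempty s B) fun _ => nonneg_of_mem_decompositionCosts

lemma mixedNorm_le_of_mem {s t : ℝ} {B : Mat p} (ht : t ∈ decompositionCosts s B) :
    mixedNorm s B ≤ t :=
  csInf_le (decompositionCosts_bddBelow s B) ht

lemma mixedNorm_vecMulVec_le (s : ℝ) (u v : Vec p) :
    mixedNorm s (vecMulVec u v) ≤ theta s u v :=
  mixedNorm_le_of_mem ⟨1, fun _ => u, fun _ => v, by simp, by simp⟩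

lemma mixedNorm_zero (s : ℝ) : mixedNorm s (0 : Mat p) = 0 :=
  (mixedNorm_le_of_mem ⟨0, Fin.elim0, Fin.elim0, by simp, by simp⟩).antisymm
    (mixedNorm_nonneg s 0)

lemma add_decompositionCosts_subset {s : ℝ} {C D : Mat p} :
    decompositionCosts s C + decompositionCosts s D ⊆ decompositionCosts s (C + D) := by
  rintro _ ⟨_, ⟨K₁, u₁, v₁, rfl, rfl⟩, _, ⟨K₂, u₂, v₂, rfl, rfl⟩, rfl⟩
  exact ⟨K₁ + K₂, Fin.append u₁ u₂, Fin.append v₁ v₂, by simp [Fin.sum_univ_add],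
    by simp [Fin.sum_univ_add]⟩

lemma mixedNorm_add_le (s : ℝ) (C D : Mat p) :
    mixedNorm s (C + D) ≤ mixedNorm s C + mixedNorm s D := by
  rw [mixedNorm_eq_sInf, mixedNorm_eq_sInf, mixedNorm_eq_sInf,
    ← csInf_add (decompositionCosts_nonempty s C) (decompositionCosts_bddBelow s C)
      (decompositionCosts_nonempty s D) (decompositionCosts_bddBelow s D)]
  exact csInf_le_csInf (decompositionCosts_bddBelow s _)
    ((decompositionCosts_nonempty s C).add (decompositionCosts_nonempty s D))
    add_decompositionCosts_subset

lemma smul_decompositionCosts_subset {s c : ℝ} (hc : 0 ≤ c) {C : Mat p} :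
    c • decompositionCosts s C ⊆ decompositionCosts s (c • C) := by
  rintro _ ⟨_, ⟨K, u, v, rfl, rfl⟩, rfl⟩
  refine ⟨K, fun k => c • u k, v, ?_, ?_⟩
  · simp [smul_sum, smul_vecMulVec]
  · simp [theta_eq_mul, atomNorm_smul_of_nonneg s hc, mul_sum, mul_assoc]

lemma mixedNorm_smul_le (s : ℝ) {c : ℝ} (hc : 0 ≤ c) (C : Mat p) :
    mixedNorm s (c • C) ≤ c * mixedNorm s C := by
  rw [mixedNorm_eq_sInf, mixedNorm_eq_sInf, ← smul_eq_mul, ← Real.sInf_smul_of_nonneg hc]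
  exact csInf_le_csInf (decompositionCosts_bddBelow s _)
    ((decompositionCosts_nonempty s C).smul_set) (smul_decompositionCosts_subset hc)

lemma mixedNorm_smul (s : ℝ) {c : ℝ} (hc : 0 < c) (C : Mat p) :
    mixedNorm s (c • C) = c * mixedNorm s C := by
  refine (mixedNorm_smul_le s hc.le C).antisymm ?_
  have h := mixedNorm_smul_le s (inv_nonneg.2 hc.le) (c • C)
  rw [smul_smul, inv_mul_cancel₀ hc.ne', one_smul] at h
  rwa [← le_inv_mul_iff₀ hc]

end MixedNorm

section DualBall

variable {p : ℕ}

def InDualBall (s : ℝ) (W : Mat p) : Prop :=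
  ∀ u v : Vec p, frob W (vecMulVec u v) ≤ theta s u v

variable {s : ℝ} {W : Mat p}

lemma InDualBall.frob_le_mixedNorm (hW : InDualBall s W) (C : Mat p) :
    frob W C ≤ mixedNorm s C := by
  refine le_csInf (decompositionCosts_nonempty s C) ?_
  rintro _ ⟨K, u, v, rfl, rfl⟩
  rw [frob_sum_right]
  exact sum_le_sum fun k _ => hW (u k) (v k)

lemma InDualBall.abs_frob_vecMulVec_le (hW : InDualBall s W) (u v : Vec p) :
    |frob W (vecMulVec u v)| ≤ theta s u v := by
  refine abs_le.2 ⟨?_, hW u v⟩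
  have h := hW (-u) v
  rw [neg_vecMulVec, frob_neg_right, theta_eq_mul, atomNorm_neg] at h
  rw [theta_eq_mul]
  linarith

lemma InDualBall.inSubdiff (hW : InDualBall s W) {B : Mat p} (hB : mixedNorm s B ≤ frob W B) :
    InSubdiff s W B := fun C => by
  rw [frob_sub_right]
  linarith [hW.frob_le_mixedNorm C]

lemma frob_of_linearMap (g : Mat p →ₗ[ℝ] ℝ) (M : Mat p) :
    frob (Matrix.of fun i j => g (single i j 1)) M = g M := by
  conv_rhs => rw [matrix_eq_sum_single M]
  simp only [frob, of_apply, map_sum]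
  refine sum_congr rfl fun i _ => sum_congr rfl fun j _ => ?_
  have h : single i j (M i j) = M i j • single i j (1 : ℝ) := by
    rw [smul_single, smul_eq_mul, mul_one]
  rw [h, map_smul, smul_eq_mul, mul_comm]

lemma exists_inDualBall_frob_eq_mixedNorm (s : ℝ) (A : Mat p) :
    ∃ Z, InDualBall s Z ∧ frob Z A = mixedNorm s A := by
  let f := LinearPMap.mkSpanSingleton' (σ := RingHom.id ℝ) A (mixedNorm s A) fun c hc => by
    rcases smul_eq_zero.1 hc with rfl | rfl
    · exact zero_smul _ _
    · rw [mixedNorm_zero, smul_zero]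
  have hf : ∀ x : f.domain, f x ≤ mixedNorm s (x : Mat p) := by
    rintro ⟨x, hx⟩
    obtain ⟨c, rfl⟩ := Submodule.mem_span_singleton.1 hx
    rw [LinearPMap.mkSpanSingleton'_apply, RingHom.id_apply, smul_eq_mul]
    rcases le_or_gt c 0 with hc | hc
    · exact (mul_nonpos_of_nonpos_of_nonneg hc (mixedNorm_nonneg s A)).trans
        (mixedNorm_nonneg s _)
    · exact (mixedNorm_smul s hc A).ge
  obtain ⟨g, hgf, hg⟩ := exists_extension_of_le_sublinear f (mixedNorm s)
    (fun c hc C => mixedNorm_smul s hc C) (mixedNorm_add_le s) hf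
  refine ⟨Matrix.of fun i j => g (single i j 1), fun u v => ?_, ?_⟩
  · rw [frob_of_linearMap]
    exact (hg _).trans (mixedNorm_vecMulVec_le s u v)
  · rw [frob_of_linearMap, hgf ⟨A, Submodule.mem_span_singleton_self A⟩]
    exact LinearPMap.mkSpanSingleton'_apply_self _ _ _ _

end DualBall

lemma mul_le_mul_of_abs_le {x y a c : ℝ} (hx : |x| ≤ a) (hy : |y| ≤ c) : x * y ≤ a * c :=
  (le_abs_self _).trans <| by
    rw [abs_mul]; exact mul_le_mul hx hy (abs_nonneg _) ((abs_nonneg _).trans hx)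

lemma mul_add_mul_le_of_sq_add_sq_le {x₁ y₁ x₂ y₂ N₁ N₂ κ : ℝ} (hκ : 0 ≤ κ) (hN₁ : 0 ≤ N₁)
    (hN₂ : 0 ≤ N₂) (h₁ : x₁ ^ 2 + κ * y₁ ^ 2 ≤ N₁ ^ 2) (h₂ : x₂ ^ 2 + κ * y₂ ^ 2 ≤ N₂ ^ 2) :
    x₁ * x₂ + κ * (y₁ * y₂) ≤ N₁ * N₂ := by
  have hprod := mul_le_mul h₁ h₂ (by positivity) (sq_nonneg N₁)
  have hcs : (x₁ * x₂ + κ * (y₁ * y₂)) ^ 2 ≤ (N₁ * N₂) ^ 2 := by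
    nlinarith [mul_nonneg hκ (sq_nonneg (x₁ * y₂ - y₁ * x₂))]
  exact (le_abs_self _).trans (abs_le_of_sq_le_sq hcs (mul_nonneg hN₁ hN₂))

section Certificate

variable {p : ℕ}

lemma frob_vecMulVec_vecMulVec (a c u v : Vec p) :
    frob (vecMulVec a c) (vecMulVec u v) = (a ⬝ᵥ u) * (c ⬝ᵥ v) := by
  simp only [frob, vecMulVec_apply, dotProduct, sum_mul_sum]
  exact sum_congr rfl fun i _ => sum_congr rfl fun j _ => by ring

lemma projMatrix_mul_vecMulVec_mul_projMatrix (b u v : Vec p) :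
    projMatrix b * vecMulVec u v * projMatrix b = vecMulVec (proj b u) (proj b v) := by
  rw [mul_vecMulVec, vecMulVec_mul, projMatrix_mulVec, vecMul_projMatrix]

lemma projMatrix_mul_mul_projMatrix (b : Vec p) (A : Mat p) :
    projMatrix b * A * projMatrix b = A - vecMulVec b (proj b (b ᵥ* A)) - vecMulVec (A *ᵥ b) b := by
  have h₁ : A * projMatrix b = A - vecMulVec (A *ᵥ b) b := by
    rw [projMatrix, Matrix.mul_sub, Matrix.mul_one, mul_vecMulVec]
  have h₂ : vecMulVec b b * A * projMatrix b = vecMulVec b (proj b (b ᵥ* A)) := by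
    rw [vecMulVec_mul, vecMulVec_mul, vecMul_projMatrix]
  calc projMatrix b * A * projMatrix b = A * projMatrix b - vecMulVec b b * A * projMatrix b := by
        simp only [projMatrix, Matrix.sub_mul, Matrix.one_mul]
    _ = _ := by rw [h₁, h₂]; abel

def certificate (s : ℝ) (b σ m m' : Vec p) (Z : Mat p) : Mat p :=
  vecMulVec (b + (√s)⁻¹ • σ) (b + (√s)⁻¹ • σ) + (1 / 10 : ℝ) • (projMatrix b * Z * projMatrix b)
    + ((√s)⁻¹ / 5) • (vecMulVec b m + vecMulVec m' b)

variable {s : ℝ} {b σ m m' : Vec p} {Z : Mat p}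

lemma frob_certificate (C : Mat p) :
    frob (certificate s b σ m m' Z) C = frob (vecMulVec (b + (√s)⁻¹ • σ) (b + (√s)⁻¹ • σ)) C
      + 1 / 10 * frob Z (projMatrix b * C * projMatrix b)
      + (√s)⁻¹ / 5 * (frob (vecMulVec b m) C + frob (vecMulVec m' b) C) := by
  simp only [certificate, frob_add_left, frob_smul_left, frob_mul_mul, transpose_projMatrix]

lemma frob_certificate_vecMulVec (u v : Vec p) :
    frob (certificate s b σ m m' Z) (vecMulVec u v)
      = (b ⬝ᵥ u + (√s)⁻¹ * (σ ⬝ᵥ u)) * (b ⬝ᵥ v + (√s)⁻¹ * (σ ⬝ᵥ v))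
        + 1 / 10 * frob Z (vecMulVec (proj b u) (proj b v))
        + (√s)⁻¹ / 5 * ((b ⬝ᵥ u) * (m ⬝ᵥ v) + (m' ⬝ᵥ u) * (b ⬝ᵥ v)) := by
  simp only [frob_certificate, projMatrix_mul_vecMulVec_mul_projMatrix, frob_vecMulVec_vecMulVec,
    add_dotProduct, smul_dotProduct, smul_eq_mul]

variable {S : Finset (Fin p)}

lemma sum_compl_abs_proj (hbS : ∀ j ∉ S, b j = 0) (u : Vec p) :
    ∑ j ∈ Sᶜ, |proj b u j| = ∑ j ∈ Sᶜ, |u j| :=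
  sum_congr rfl fun j hj => by rw [proj_apply_of_eq_zero (hbS j (mem_compl.1 hj))]

lemma atomNorm_proj_le (hS : (S.card : ℝ) ≤ s) (hbS : ∀ j ∉ S, b j = 0) (u : Vec p) :
    atomNorm s (proj b u) ≤ 2 * l2 (proj b u) + (√s)⁻¹ * ∑ j ∈ Sᶜ, |u j| := by
  simpa only [sum_compl_abs_proj hbS] using atomNorm_le_two_mul_l2_add hS (proj b u)

lemma l2_proj_le (hb : l2 b ≤ 1) (u : Vec p) : l2 (proj b u) ≤ l2 u :=
  le_of_pow_le_pow_left₀ two_ne_zero (l2_nonneg u) <| by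
    nlinarith [sq_l2_proj_add_sq_le hb u, sq_nonneg (b ⬝ᵥ u)]

lemma sq_add_sq_atomNorm_proj_le (hS : (S.card : ℝ) ≤ s) (hb : l2 b ≤ 1)
    (hbS : ∀ j ∉ S, b j = 0) (u : Vec p) :
    (|b ⬝ᵥ u| + (√s)⁻¹ * ∑ j ∈ S, |u j| + ((√s)⁻¹ * ∑ j ∈ Sᶜ, |u j|) / 5) ^ 2
      + 1 / 10 * atomNorm s (proj b u) ^ 2 ≤ atomNorm s u ^ 2 := by
  have hY := atomNorm_proj_le hS hbS u
  have hdρ := sq_l2_proj_add_sq_le hb u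
  rw [atomNorm_eq s S u]
  rw [← sq_abs (b ⬝ᵥ u)] at hdρ
  set d := |b ⬝ᵥ u|
  set t := (√s)⁻¹ * ∑ j ∈ S, |u j|
  set c := (√s)⁻¹ * ∑ j ∈ Sᶜ, |u j|
  set ρ := l2 (proj b u)
  set r := l2 u
  have ht : 0 ≤ t := by positivity
  have hc : 0 ≤ c := by positivity
  have hd : 0 ≤ d := abs_nonneg _
  have hρ : 0 ≤ ρ := l2_nonneg _
  have hdr : d ≤ r := le_of_pow_le_pow_left₀ two_ne_zero (l2_nonneg u) (by nlinarith)
  have hρr : ρ ≤ r := l2_proj_le hb u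
  have hY2 : atomNorm s (proj b u) ^ 2 ≤ (2 * ρ + c) ^ 2 :=
    pow_le_pow_left₀ (atomNorm_nonneg s _) hY 2
  nlinarith [mul_le_mul_of_nonneg_right hdr ht, mul_le_mul_of_nonneg_right hdr hc,
    mul_le_mul_of_nonneg_right hρr hc, mul_nonneg ht hc, mul_nonneg hc hc]

lemma certificate_inDualBall (hS : (S.card : ℝ) ≤ s) (hb : l2 b ≤ 1) (hbS : ∀ j ∉ S, b j = 0)
    (hσ : IsSignVectorOn S σ) (hm : IsSignVectorOn Sᶜ m) (hm' : IsSignVectorOn Sᶜ m')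
    (hZ : InDualBall s Z) : InDualBall s (certificate s b σ m m' Z) := by
  intro u v
  set si := (√s)⁻¹
  have hsi : 0 ≤ si := by positivity
  have hw : ∀ x : Vec p, |b ⬝ᵥ x + si * (σ ⬝ᵥ x)| ≤ |b ⬝ᵥ x| + si * ∑ j ∈ S, |x j| := fun x =>
    (abs_add_le _ _).trans <| by
      rw [abs_mul, abs_of_nonneg hsi]
      gcongr
      exact abs_dotProduct_le_sum_abs hσ x
  have hoff : ∀ {n : Vec p}, IsSignVectorOn Sᶜ n → ∀ x, |si * (n ⬝ᵥ x)| ≤ si * ∑ j ∈ Sᶜ, |x j| :=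
    fun hn x => by
      rw [abs_mul, abs_of_nonneg hsi]
      gcongr
      exact abs_dotProduct_le_sum_abs hn x
  have e₁ := mul_le_mul_of_abs_le (hw u) (hw v)
  have e₂ := (le_abs_self _).trans (hZ.abs_frob_vecMulVec_le (proj b u) (proj b v))
  have e₃ := mul_le_mul_of_abs_le (le_refl |b ⬝ᵥ u|) (hoff hm v)
  have e₄ := mul_le_mul_of_abs_le (hoff hm' u) (le_refl |b ⬝ᵥ v|)
  rw [theta_eq_mul] at e₂ ⊢
  rw [frob_certificate_vecMulVec]
  refine le_trans ?_ (mul_add_mul_le_of_sq_add_sq_le (by norm_num) (atomNorm_nonneg s u)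
    (atomNorm_nonneg s v) (sq_add_sq_atomNorm_proj_le hS hb hbS u)
    (sq_add_sq_atomNorm_proj_le hS hb hbS v))
  have htu : 0 ≤ si * ∑ j ∈ S, |u j| := by positivity
  have htv : 0 ≤ si * ∑ j ∈ S, |v j| := by positivity
  have hcu : 0 ≤ si * ∑ j ∈ Sᶜ, |u j| := by positivity
  have hcv : 0 ≤ si * ∑ j ∈ Sᶜ, |v j| := by positivity
  linarith [mul_nonneg htu hcv, mul_nonneg hcu htv, mul_nonneg hcu hcv]

def offSign (S : Finset (Fin p)) (x : Vec p) : Vec p :=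
  fun j => if j ∈ S then 0 else (SignType.sign (x j) : ℝ)

lemma abs_sign_le_one (x : ℝ) : |(SignType.sign x : ℝ)| ≤ 1 := by
  rcases SignType.sign x with _ | _ | _ <;> simp

lemma isSignVectorOn_offSign (x : Vec p) : IsSignVectorOn Sᶜ (offSign S x) :=
  ⟨fun j => by unfold offSign; split_ifs <;> simp [abs_sign_le_one],
   fun j hj => by simp [offSign, not_not.1 (mem_compl.not.1 hj)]⟩

lemma offSign_dotProduct (x : Vec p) : offSign S x ⬝ᵥ x = ∑ j ∈ Sᶜ, |x j| := by
  rw [dotProduct, ← sum_add_sum_compl S]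
  rw [sum_eq_zero fun j hj => by simp [offSign, hj], zero_add]
  exact sum_congr rfl fun j hj => by simp [offSign, mem_compl.1 hj, sign_mul_self]

lemma l2_add_inv_sqrt_smul_le_two (hS : (S.card : ℝ) ≤ s) (hb : l2 b ≤ 1)
    (hσ : IsSignVectorOn S σ) : l2 (b + (√s)⁻¹ • σ) ≤ 2 := by
  calc l2 (b + (√s)⁻¹ • σ) ≤ l2 b + (√s)⁻¹ * l2 σ := by
        simpa [l2_smul, abs_of_nonneg] using l2_add_le b ((√s)⁻¹ • σ)
    _ ≤ 2 := by linarith [inv_sqrt_mul_l2_le_one hS hσ]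

lemma abs_frob_vecMulVec_self_le (w : Vec p) (A : Mat p) :
    |frob (vecMulVec w w) A| ≤ l2 w ^ 2 * frobNorm A := by
  rw [frob_comm, frob_vecMulVec]
  calc |w ⬝ᵥ (A *ᵥ w)| ≤ l2 w * (frobNorm A * l2 w) :=
        (abs_dotProduct_le w _).trans (mul_le_mul_of_nonneg_left (l2_mulVec_le A w) (l2_nonneg w))
    _ = l2 w ^ 2 * frobNorm A := by ring

lemma atomNorm_le_two (hS : (S.card : ℝ) ≤ s) (hb : l2 b ≤ 1) (hbS : ∀ j ∉ S, b j = 0) :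
    atomNorm s b ≤ 2 := by
  have h := atomNorm_le_two_mul_l2_add hS b
  rw [sum_eq_zero fun j hj => by rw [hbS j (mem_compl.1 hj), abs_zero], mul_zero] at h
  linarith

lemma frob_vecMulVec_offSign_vecMul (b : Vec p) (A : Mat p) :
    frob (vecMulVec b (offSign S (b ᵥ* A))) A = ∑ j ∈ Sᶜ, |(b ᵥ* A) j| := by
  rw [frob_comm, frob_vecMulVec, dotProduct_mulVec, dotProduct_comm, offSign_dotProduct]

lemma frob_vecMulVec_offSign_mulVec (b : Vec p) (A : Mat p) :
    frob (vecMulVec (offSign S (A *ᵥ b)) b) A = ∑ j ∈ Sᶜ, |(A *ᵥ b) j| := by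
  rw [frob_comm, frob_vecMulVec, offSign_dotProduct]

lemma le_frob_certificate (hS : (S.card : ℝ) ≤ s) (hb : l2 b ≤ 1) (hbS : ∀ j ∉ S, b j = 0)
    (hσ : IsSignVectorOn S σ) (A : Mat p) (hZ : InDualBall s Z)
    (hZA : frob Z A = mixedNorm s A) :
    1 / 10 * mixedNorm s A - 5 * frobNorm A
      ≤ frob (certificate s b σ (offSign S (b ᵥ* A)) (offSign S (A *ᵥ b)) Z) A := by
  set F := frobNorm A
  have hF : 0 ≤ F := Real.sqrt_nonneg _
  have hww := abs_le.1 (abs_frob_vecMulVec_self_le (b + (√s)⁻¹ • σ) A)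
  have hw : l2 (b + (√s)⁻¹ • σ) ^ 2 * F ≤ 4 * F := by
    have := l2_add_inv_sqrt_smul_le_two hS hb hσ
    gcongr
    nlinarith [l2_nonneg (b + (√s)⁻¹ • σ)]
  have hg : atomNorm s (proj b (b ᵥ* A)) ≤ 2 * F + (√s)⁻¹ * ∑ j ∈ Sᶜ, |(b ᵥ* A) j| := by
    have h₁ := atomNorm_proj_le hS hbS (b ᵥ* A)
    have h₂ := (l2_proj_le hb _).trans ((l2_vecMul_le A b).trans (mul_le_of_le_one_right hF hb))
    linarith
  have hf : atomNorm s (A *ᵥ b) ≤ 2 * F + (√s)⁻¹ * ∑ j ∈ Sᶜ, |(A *ᵥ b) j| := by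
    have h₁ := atomNorm_le_two_mul_l2_add hS (A *ᵥ b)
    have h₂ := (l2_mulVec_le A b).trans (mul_le_of_le_one_right hF hb)
    linarith
  have hb₂ := atomNorm_le_two hS hb hbS
  have hZg := abs_le.1 (hZ.abs_frob_vecMulVec_le b (proj b (b ᵥ* A)))
  have hZf := abs_le.1 (hZ.abs_frob_vecMulVec_le (A *ᵥ b) b)
  rw [theta_eq_mul] at hZg hZf
  have hZg' := mul_le_mul hb₂ hg (atomNorm_nonneg s _) zero_le_two
  have hZf' := mul_le_mul hf hb₂ (atomNorm_nonneg s _) (by positivity)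
  rw [frob_certificate, projMatrix_mul_mul_projMatrix, frob_sub_right, frob_sub_right, hZA,
    frob_vecMulVec_offSign_vecMul, frob_vecMulVec_offSign_mulVec]
  linarith

end Certificate

section SparseVector

variable {p : ℕ}

def supportFinset (β : Vec p) : Finset (Fin p) := univ.filter fun i => β i ≠ 0

lemma card_supportFinset_le {s : ℕ} {β : Vec p} (hβ : IsSparse s β) :
    ((supportFinset β).card : ℝ) ≤ s := by
  have h : {i | β i ≠ 0}.ncard = (supportFinset β).card := by
    rw [← Set.ncard_coe_finset]; simp [supportFinset]
  rw [IsSparse, h] at hβ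
  exact_mod_cast hβ

lemma eq_zero_of_notMem_supportFinset {β : Vec p} {j : Fin p} (hj : j ∉ supportFinset β) :
    β j = 0 := by
  simpa [supportFinset] using hj

/-- This is `0` when `β = 0` (as `0⁻¹ = 0`), so the construction needs no case split on `β`. -/
def unitVec (β : Vec p) : Vec p := (l2 β)⁻¹ • β

lemma l2_unitVec_le (β : Vec p) : l2 (unitVec β) ≤ 1 := by
  rw [unitVec, l2_smul, abs_inv, abs_of_nonneg (l2_nonneg β)]
  exact inv_mul_le_one_of_le₀ le_rfl (l2_nonneg β)

lemma unitVec_apply_of_notMem {β : Vec p} {j : Fin p} (hj : j ∉ supportFinset β) :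
    unitVec β j = 0 := by
  simp [unitVec, eq_zero_of_notMem_supportFinset hj]

lemma unitVec_dotProduct_self (β : Vec p) : unitVec β ⬝ᵥ β = l2 β := by
  have h : β ⬝ᵥ β = l2 β ^ 2 := by rw [sq_l2]; simp only [dotProduct, sq]
  rw [unitVec, smul_dotProduct, smul_eq_mul, h]
  rcases eq_or_ne (l2 β) 0 with h0 | h0
  · simp [h0]
  · field_simp

lemma proj_unitVec_self (β : Vec p) : proj (unitVec β) β = 0 := by
  rw [proj, unitVec_dotProduct_self, unitVec, smul_smul]
  rcases eq_or_ne (l2 β) 0 with h | h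
  · simp [l2_eq_zero.1 h]
  · rw [mul_inv_cancel₀ h, one_smul, sub_self]

def signVec (β : Vec p) : Vec p := fun j => SignType.sign (β j)

lemma isSignVectorOn_signVec (β : Vec p) : IsSignVectorOn (supportFinset β) (signVec β) :=
  ⟨fun _ => abs_sign_le_one _, fun _ hj => by simp [signVec, eq_zero_of_notMem_supportFinset hj]⟩

lemma signVec_dotProduct_self (β : Vec p) : signVec β ⬝ᵥ β = l1 β := by
  simp [signVec, dotProduct, l1, sign_mul_self]

lemma dotProduct_eq_zero_of_isSignVectorOn_compl {β m : Vec p}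
    (hm : IsSignVectorOn (supportFinset β)ᶜ m) : m ⬝ᵥ β = 0 :=
  sum_eq_zero fun j _ => by
    by_cases hj : j ∈ supportFinset β
    · rw [hm.2 j (notMem_compl.2 hj), zero_mul]
    · rw [eq_zero_of_notMem_supportFinset hj, mul_zero]

lemma frob_certificate_vecMulVec_self (s : ℝ) (β : Vec p) {m m' : Vec p}
    (hm : IsSignVectorOn (supportFinset β)ᶜ m) (hm' : IsSignVectorOn (supportFinset β)ᶜ m')
    (Z : Mat p) :
    frob (certificate s (unitVec β) (signVec β) m m' Z) (vecMulVec β β) = theta s β β := by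
  rw [frob_certificate_vecMulVec, proj_unitVec_self, unitVec_dotProduct_self,
    signVec_dotProduct_self, dotProduct_eq_zero_of_isSignVectorOn_compl hm,
    dotProduct_eq_zero_of_isSignVectorOn_compl hm', zero_vecMulVec, theta_eq_mul, atomNorm]
  simp [frob]

end SparseVector

theorem subgradient_lower_bound_general {p s : ℕ} (β : Vec p) (hβ : IsSparse s β)
    (A : Mat p) :
    ∃ W : Mat p, InSubdiff (s : ℝ) W (Matrix.vecMulVec β β) ∧
      (1 / 10) * mixedNorm (s : ℝ) A - 5 * frobNorm A ≤ frob W A := by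
  set S := supportFinset β
  have hS := card_supportFinset_le hβ
  have hb := l2_unitVec_le β
  have hbS : ∀ j ∉ S, unitVec β j = 0 := fun _ => unitVec_apply_of_notMem
  obtain ⟨Z, hZ, hZA⟩ := exists_inDualBall_frob_eq_mixedNorm (s : ℝ) A
  refine ⟨certificate s (unitVec β) (signVec β) (offSign S (unitVec β ᵥ* A))
    (offSign S (A *ᵥ unitVec β)) Z, ?_, le_frob_certificate hS hb hbS (isSignVectorOn_signVec β)
    A hZ hZA⟩
  refine (certificate_inDualBall hS hb hbS (isSignVectorOn_signVec β) (isSignVectorOn_offSign _)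
    (isSignVectorOn_offSign _) hZ).inSubdiff ?_
  rw [frob_certificate_vecMulVec_self _ β (isSignVectorOn_offSign _) (isSignVectorOn_offSign _)]
  exact mixedNorm_vecMulVec_le _ β β

/-- Lemma 3.1 (subgradients of the mixed atomic norm). -/
theorem subgradient_lower_bound {p s : ℕ} (hs : 0 < s) (β : Vec p) (hβ : IsSparse s β)
    (A : Mat p) :
    ∃ W : Mat p, InSubdiff (s : ℝ) W (Matrix.vecMulVec β β) ∧
      (1 / 10) * mixedNorm (s : ℝ) A - 5 * frobNorm A ≤ frob W A :=
  subgradient_lower_bound_general β hβ A
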